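/- Let R be a semiartinian von Neumann regular ring with primitive factors artinian of Loewy length 2 (i.e., Soc R ≠ R and R/Soc R is completely reducible). Then a right R-module M is R-projective if and only if every homomorphism from M to R/Soc(R) factors through the canonical projection π : R → R/Soc(R). -/
import Mathlib


universe u

open Submodule

/-- The socle of a module: the supremum of all simple submodules. -/
noncomputable def socle (R : Type u) [Ring R] (M : Type u) [AddCommGroup M] [Module R M] :
    Submodule R M :=
  sSup {S : Submodule R M | IsAtom S}

/-- The Loewy (socle) sequence of a module, defined by transfinite recursion:
`loewy R M 0 = ⊥`, `loewy R M (α+1) / loewy R M α = Soc (M ⧸ loewy R M α)`, and unions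
at limit ordinals. -/
noncomputable def loewy (R : Type u) [Ring R] (M : Type u) [AddCommGroup M] [Module R M]
    (o : Ordinal.{u}) : Submodule R M :=
  o.limitRecOn ⊥ (fun _ N => (socle R (M ⧸ N)).comap N.mkQ)
    (fun o _ IH => ⨆ (b : Ordinal) (h : b < o), IH b h)

/-- The Loewy length of a module: the least ordinal `o` with `loewy R M o = ⊤`. -/
noncomputable def loewyLength (R : Type u) [Ring R] (M : Type u) [AddCommGroup M]
    [Module R M] : Ordinal.{u} :=
  sInf {o : Ordinal | loewy R M o = ⊤}

/-- A ring is semiartinian if every nonzero module has a nonzero socle. -/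
def IsSemiartinianRing (R : Type u) [Ring R] : Prop :=
  ∀ (M : Type u) [AddCommGroup M] [Module R M], Nontrivial M → socle R M ≠ ⊥

/-- A ring is von Neumann regular if for every `r` there is `s` with `r * s * r = r`. -/
def IsVonNeumannRegularRing (R : Type u) [Ring R] : Prop :=
  ∀ r : R, ∃ s : R, r * s * r = r

/-- `R` has primitive factors artinian: for every primitive ideal `P` (= annihilator of a
simple module), the factor `R/P` is artinian. -/
def HasPrimitiveFactorsArtinian (R : Type u) [Ring R] : Prop :=
  ∀ (M : Type u) [AddCommGroup M] [Module R M], IsSimpleModule R M →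
    IsArtinian R (R ⧸ (Module.annihilator R M : Submodule R R))

/-- The `α`-th layer of the Loewy sequence of `R`, as a submodule of `R ⧸ loewy R R α`. -/
noncomputable def loewyLayer (R : Type u) [Ring R] (α : Ordinal.{u}) :
    Submodule R (R ⧸ loewy R R α) :=
  (loewy R R (α + 1)).map (loewy R R α).mkQ

/-- The canonical projection `π_α : S_{α+1} → S_{α+1}/S_α`. -/
noncomputable def layerProj (R : Type u) [Ring R] (α : Ordinal.{u}) :
    (loewy R R (α + 1) : Submodule R R) →ₗ[R] (loewyLayer R α) :=
  LinearMap.codRestrict _ ((loewy R R α).mkQ.comp (loewy R R (α + 1)).subtype)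
    (fun x => ⟨(x : R), x.2, rfl⟩)

/-- `M` is weakly `R`-projective: every homomorphism from `M` to a layer `S_{α+1}/S_α`
(`0 < α`) with finitely generated image factors through `π_α : S_{α+1} → S_{α+1}/S_α`. -/
def IsWeaklyRProjective (R : Type u) [Ring R] (M : Type u) [AddCommGroup M]
    [Module R M] : Prop :=
  ∀ α : Ordinal.{u}, 0 < α →
    ∀ φ : M →ₗ[R] (loewyLayer R α), (LinearMap.range φ).FG →
      ∃ ψ : M →ₗ[R] (loewy R R (α + 1) : Submodule R R), (layerProj R α).comp ψ = φ

/-- `M` is layer projective: for each `0 < α`, every simple submodule of the `α`-th layer of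
`M` is isomorphic to a simple (direct summand) submodule of the `α`-th layer of `R`, i.e. the
`α`-th layer of `M` is a projective `R/S_α`-module. -/
def IsLayerProjective (R : Type u) [Ring R] (M : Type u) [AddCommGroup M]
    [Module R M] : Prop :=
  ∀ α : Ordinal.{u}, 0 < α →
    ∀ T : Submodule R ((loewy R M (α + 1)).map (loewy R M α).mkQ), IsAtom T →
      ∃ T' : Submodule R (loewyLayer R α), IsAtom T' ∧ Nonempty (T ≃ₗ[R] T')

/-- The submodule `M·S` of `M`, generated by all products `s • m` with `s ∈ S`. -/
def smulSub (R : Type u) [Ring R] (M : Type u) [AddCommGroup M] [Module R M]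
    (S : Submodule R R) : Submodule R M :=
  Submodule.span R {x : M | ∃ s ∈ S, ∃ m : M, s • m = x}

/-- `M` is `R`-projective. -/
def IsRProjective (R : Type u) [Ring R] (M : Type u) [AddCommGroup M] [Module R M] : Prop :=
  ∀ (I : Submodule R R) (f : M →ₗ[R] R ⧸ I), ∃ g : M →ₗ[R] R, I.mkQ.comp g = f


section Aux

variable {R N P : Type u} [Ring R] [AddCommGroup N] [Module R N]
  [AddCommGroup P] [Module R P]

/-- A surjective linear map out of a semisimple module has a right inverse. -/
lemma exists_rightInverse_of_surjective [IsSemisimpleModule R N]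
    (q : N →ₗ[R] P) (hq : Function.Surjective q) :
    ∃ σ : P →ₗ[R] N, q.comp σ = LinearMap.id := by
  obtain ⟨K, hK⟩ := exists_isCompl (LinearMap.ker q)
  have hinj : Function.Injective (q.comp K.subtype) := by
    rw [← LinearMap.ker_eq_bot]
    rw [Submodule.eq_bot_iff]
    rintro ⟨x, hxK⟩ hx
    have hxker : x ∈ LinearMap.ker q := hx
    have : x ∈ LinearMap.ker q ⊓ K := ⟨hxker, hxK⟩
    rw [hK.inf_eq_bot] at this
    exact Subtype.ext this
  have hsurj : Function.Surjective (q.comp K.subtype) := by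
    intro p
    obtain ⟨n, hn⟩ := hq p
    have hmem : n ∈ LinearMap.ker q ⊔ K := by rw [hK.sup_eq_top]; trivial
    obtain ⟨a, ha, b, hb, hab⟩ := Submodule.mem_sup.mp hmem
    refine ⟨⟨b, hb⟩, ?_⟩
    have : q b = q n := by
      rw [← hab, map_add, LinearMap.mem_ker.mp ha, zero_add]
    simpa [this] using hn
  let e := LinearEquiv.ofBijective (q.comp K.subtype) ⟨hinj, hsurj⟩
  refine ⟨K.subtype.comp e.symm.toLinearMap, ?_⟩
  ext x
  have : (q.comp K.subtype) (e.symm x) = x := e.apply_symm_apply x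
  simpa using this

/-- The socle is a semisimple module. -/
lemma socle_isSemisimple (R M : Type u) [Ring R] [AddCommGroup M] [Module R M] :
    IsSemisimpleModule R (socle R M) := by
  have : socle R M = ⨆ S ∈ {S : Submodule R M | IsAtom S}, S := by
    rw [socle, sSup_eq_iSup]
  rw [this]
  exact isSemisimpleModule_biSup_of_isSemisimpleModule_submodule fun S hS => by
    have : IsSimpleModule R S := isSimpleModule_iff_isAtom.mpr hS
    infer_instance

end Aux

/-- Over a semiartinian von Neumann regular ring with primitive factors artinian of Loewy
length 2, a module `M` is `R`-projective iff every homomorphism `M → R/Soc R` factors through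
the canonical projection `R → R/Soc R`. -/
theorem isRProjective_iff_of_loewyLength_two
    (R : Type u) [Ring R] (hsa : IsSemiartinianRing R)
    (hvnr : IsVonNeumannRegularRing R) (hpfa : HasPrimitiveFactorsArtinian R)
    (h1 : socle R R ≠ ⊥) (h2 : socle R R ≠ ⊤)
    (h3 : IsSemisimpleModule R (R ⧸ socle R R))
    (M : Type u) [AddCommGroup M] [Module R M] :
    IsRProjective R M ↔
      ∀ f : M →ₗ[R] R ⧸ socle R R, ∃ g : M →ₗ[R] R, (socle R R).mkQ.comp g = f := by
  constructor
  · intro h f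
    exact h (socle R R) f
  · intro hyp I f
    set S := socle R R with hSdef
    set J := I ⊔ S with hJdef
    have hIJ : I ≤ J := le_sup_left
    have hSJ : S ≤ J := le_sup_right
    -- quotient maps
    have hker_q : S ≤ LinearMap.ker J.mkQ := by
      rwa [Submodule.ker_mkQ]
    have hker_q' : I ≤ LinearMap.ker J.mkQ := by
      rwa [Submodule.ker_mkQ]
    let q : (R ⧸ S) →ₗ[R] R ⧸ J := Submodule.liftQ S J.mkQ hker_q
    let q' : (R ⧸ I) →ₗ[R] R ⧸ J := Submodule.liftQ I J.mkQ hker_q'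
    have hq_mkQ : q.comp S.mkQ = J.mkQ := by
      ext x; rfl
    have hq'_mkQ : q'.comp I.mkQ = J.mkQ := by
      ext x; rfl
    have hq_surj : Function.Surjective q := by
      intro y
      obtain ⟨x, rfl⟩ := Submodule.mkQ_surjective J y
      exact ⟨S.mkQ x, rfl⟩
    have _ : IsSemisimpleModule R (R ⧸ S) := h3
    obtain ⟨σ, hσ⟩ := exists_rightInverse_of_surjective q hq_surj
    -- lift the composite M → R/J through R
    obtain ⟨g₀, hg₀⟩ := hyp (σ.comp (q'.comp f))
    -- the error term
    set d : M →ₗ[R] R ⧸ I := f - I.mkQ.comp g₀ with hd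
    have hqd : q'.comp d = 0 := by
      have h1' : q'.comp (I.mkQ.comp g₀) = J.mkQ.comp g₀ := by
        rw [← LinearMap.comp_assoc, hq'_mkQ]
      have h2' : J.mkQ.comp g₀ = q'.comp f := by
        have : J.mkQ.comp g₀ = (q.comp S.mkQ).comp g₀ := by rw [hq_mkQ]
        rw [this, LinearMap.comp_assoc, hg₀, ← LinearMap.comp_assoc, hσ,
          LinearMap.id_comp]
      rw [hd, LinearMap.comp_sub, h1', h2', sub_self]
    have hrange_d : ∀ x : M, d x ∈ S.map I.mkQ := by
      intro x
      have hx : q' (d x) = 0 := by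
        have := congrArg (fun φ => φ x) hqd
        simpa using this
      have hker : LinearMap.ker q' = J.map I.mkQ := by
        simp only [q', Submodule.ker_liftQ, Submodule.ker_mkQ]
      have hImap : I.map I.mkQ = ⊥ := by
        rw [eq_bot_iff]
        rintro _ ⟨y, hy, rfl⟩
        simpa [Submodule.mkQ_apply, Submodule.Quotient.mk_eq_zero] using hy
      have hmap : J.map I.mkQ = S.map I.mkQ := by
        rw [hJdef, Submodule.map_sup, hImap, bot_sup_eq]
      have : d x ∈ LinearMap.ker q' := hx
      rw [hker, hmap] at this
      exact this
    -- semisimplicity of S: complement of S ⊓ I inside S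
    have hSss : IsSemisimpleModule R S := socle_isSemisimple R R
    obtain ⟨C₀, hC₀⟩ := exists_isCompl (I.comap S.subtype)
    set C : Submodule R R := C₀.map S.subtype with hC
    have hCS : C ≤ S := by
      rw [hC]
      rintro _ ⟨⟨y, hy⟩, -, rfl⟩
      exact hy
    have hCI : C ⊓ I = ⊥ := by
      rw [Submodule.eq_bot_iff]
      rintro x ⟨hxC, hxI⟩
      obtain ⟨⟨y, hyS⟩, hy₀, rfl⟩ := hxC
      have : (⟨y, hyS⟩ : S) ∈ I.comap S.subtype ⊓ C₀ := ⟨hxI, hy₀⟩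
      rw [hC₀.inf_eq_bot] at this
      have h0 : (⟨y, hyS⟩ : S) = 0 := by simpa using this
      simpa using congrArg S.subtype h0
    have hCsup : C ⊔ I = S ⊔ I := by
      apply le_antisymm (sup_le (hCS.trans le_sup_left) le_sup_right)
      apply sup_le _ le_sup_right
      intro s hs
      have hmem : (⟨s, hs⟩ : S) ∈ I.comap S.subtype ⊔ C₀ := by
        rw [hC₀.sup_eq_top]; trivial
      obtain ⟨a, ha, b, hb, hab⟩ := Submodule.mem_sup.mp hmem
      have : s = (a : R) + (b : R) := by
        have := congrArg S.subtype hab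
        simpa using this.symm
      rw [this]
      exact add_mem (Submodule.mem_sup_right ha)
        (Submodule.mem_sup_left ⟨b, hb, rfl⟩)
    -- mkQ I restricted to C is injective onto S.map I.mkQ
    let r : C →ₗ[R] R ⧸ I := I.mkQ.comp C.subtype
    have hrinj : Function.Injective r := by
      rw [← LinearMap.ker_eq_bot, Submodule.eq_bot_iff]
      rintro ⟨x, hxC⟩ hx
      have hxI : x ∈ I := by
        have hx0 : I.mkQ x = 0 := hx
        rw [Submodule.mkQ_apply] at hx0
        exact (Submodule.Quotient.mk_eq_zero I).mp hx0
      have : x ∈ C ⊓ I := ⟨hxC, hxI⟩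
      rw [hCI] at this
      exact Subtype.ext this
    have hrrange : LinearMap.range r = S.map I.mkQ := by
      have h₁ : LinearMap.range r = C.map I.mkQ := by
        apply le_antisymm
        · rintro _ ⟨⟨x, hx⟩, rfl⟩
          exact ⟨x, hx, rfl⟩
        · rintro _ ⟨x, hx, rfl⟩
          exact ⟨⟨x, hx⟩, rfl⟩
      have hImap : I.map I.mkQ = ⊥ := by
        rw [eq_bot_iff]
        rintro _ ⟨y, hy, rfl⟩
        simpa [Submodule.mkQ_apply, Submodule.Quotient.mk_eq_zero] using hy
      have h₂ : C.map I.mkQ = (C ⊔ I).map I.mkQ := by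
        rw [Submodule.map_sup, hImap, sup_bot_eq]
      have h₃ : (S ⊔ I).map I.mkQ = S.map I.mkQ := by
        rw [Submodule.map_sup, hImap, sup_bot_eq]
      rw [h₁, h₂, hCsup, h₃]
    let r' : C →ₗ[R] (S.map I.mkQ : Submodule R (R ⧸ I)) :=
      LinearMap.codRestrict _ r (fun c => hrrange ▸ LinearMap.mem_range_self r c)
    have hr'bij : Function.Bijective r' := by
      constructor
      · intro a b hab
        exact hrinj (congrArg Subtype.val hab)
      · rintro ⟨y, hy⟩
        rw [← hrrange] at hy
        obtain ⟨c, hc⟩ := hy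
        exact ⟨c, Subtype.ext hc⟩
    let e := LinearEquiv.ofBijective r' hr'bij
    let d' : M →ₗ[R] (S.map I.mkQ : Submodule R (R ⧸ I)) :=
      LinearMap.codRestrict _ d hrange_d
    set hmap : M →ₗ[R] R := C.subtype.comp (e.symm.toLinearMap.comp d') with hhmap
    refine ⟨g₀ + hmap, ?_⟩
    ext x
    have key : I.mkQ (hmap x) = d x := by
      have h₁ : hmap x = ↑(e.symm (d' x)) := rfl
      have h₂ : I.mkQ ↑(e.symm (d' x)) = ↑(r' (e.symm (d' x))) := rfl
      have h₃ : r' (e.symm (d' x)) = d' x := e.apply_symm_apply (d' x)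
      rw [h₁, h₂, h₃]
      rfl
    calc I.mkQ ((g₀ + hmap) x) = I.mkQ (g₀ x) + I.mkQ (hmap x) := by simp
      _ = I.mkQ (g₀ x) + d x := by rw [key]
      _ = f x := by rw [hd]; simp
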